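/- arXiv:1501.06192 — 2 statements merged into one kernel-verified Lean document; each statement's English description precedes it below -/
import Mathlib

section
/- (Hartman–Stampacchia maximum principle) Let τ : ℝ → [0,∞) be a non-increasing function and suppose there exist constants C > 0, k₀ ≥ 0, δ > 0 and α ∈ [0, 1+δ] such that ∫_k^∞ τ(t) dt ≤ C k^α (τ(k))^{1+δ} for all k ≥ k₀. Then there exists a number k_max such that τ(k) = 0 for all k ≥ k_max. -/
/-!
Write `φ k = ∫_k^∞ τ`. Since `τ` is non-increasing, `(b - a) τ(b) ≤ φ(a)`, so the hypothesis
becomes Stampacchia's recursive inequality `φ(b) ≤ C L^{1+δ} (φ(a) / (b - a))^{1+δ}` for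
`max k₀ 1 ≤ a < b ≤ L`; here `α ≤ 1 + δ` lets `L^{1+δ}` absorb `b^α`. Along the levels
`k_n = 2K - K / 2^n` the numbers `Y_n = φ(k_n)` then satisfy `Y_{n+1} ≤ A 2^{(1+δ)n} Y_n^{1+δ}`,
and such a sequence tends to zero as soon as `Y_0` is small enough. Because `φ(K) → 0`, a large `K` makes
`Y_0 = φ(K)` small, whence `φ(2K) = 0` and `τ` vanishes beyond `2K`.
-/

open MeasureTheory Set Filter Topology

/-- `hY0` is the classical smallness condition `Y 0 ≤ A^{-1/δ} b^{-1/δ²}` raised to the power `δ`. -/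
theorem le_mul_pow_of_le_mul_pow_mul_rpow {Y : ℕ → ℝ} {A b δ : ℝ} (hY : ∀ n, 0 ≤ Y n)
    (hA : 0 ≤ A) (hb : 0 < b) (hδ : 0 < δ)
    (hrec : ∀ n, Y (n + 1) ≤ A * b ^ n * Y n ^ (1 + δ)) (hY0 : A * Y 0 ^ δ ≤ (b ^ δ⁻¹)⁻¹)
    (n : ℕ) : Y n ≤ Y 0 * ((b ^ δ⁻¹)⁻¹) ^ n := by
  set q := (b ^ δ⁻¹)⁻¹
  have hq : 0 ≤ q := by positivity
  have hbq : b * q ^ δ = 1 := by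
    rw [Real.inv_rpow (by positivity), Real.rpow_inv_rpow hb.le hδ.ne', mul_inv_cancel₀ hb.ne']
  induction n with
  | zero => simp
  | succ n ih =>
    have hpow : (Y 0 * q ^ n) ^ (1 + δ) = Y 0 ^ δ * (Y 0 * q ^ n) * (q ^ δ) ^ n := by
      rw [Real.rpow_add' (mul_nonneg (hY 0) (pow_nonneg hq n)) (by positivity), Real.rpow_one,
        Real.mul_rpow (hY 0) (by positivity), ← Real.rpow_pow_comm hq]
      ring
    calc Y (n + 1) ≤ A * b ^ n * Y n ^ (1 + δ) := hrec n
      _ ≤ A * b ^ n * (Y 0 * q ^ n) ^ (1 + δ) := by gcongr; exact hY n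
      _ = A * Y 0 ^ δ * (Y 0 * q ^ n) * (b * q ^ δ) ^ n := by rw [hpow, mul_pow]; ring
      _ = A * Y 0 ^ δ * (Y 0 * q ^ n) := by rw [hbq, one_pow, mul_one]
      _ ≤ q * (Y 0 * q ^ n) := by gcongr; exact mul_nonneg (hY 0) (by positivity)
      _ = Y 0 * q ^ (n + 1) := by ring

theorem tendsto_zero_of_le_mul_pow_mul_rpow {Y : ℕ → ℝ} {A b δ : ℝ} (hY : ∀ n, 0 ≤ Y n)
    (hA : 0 ≤ A) (hb : 1 < b) (hδ : 0 < δ)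
    (hrec : ∀ n, Y (n + 1) ≤ A * b ^ n * Y n ^ (1 + δ)) (hY0 : A * Y 0 ^ δ ≤ (b ^ δ⁻¹)⁻¹) :
    Tendsto Y atTop (𝓝 0) := by
  have hq : (b ^ δ⁻¹)⁻¹ < 1 := inv_lt_one_of_one_lt₀ (Real.one_lt_rpow hb (by positivity))
  have hgeom := (tendsto_pow_atTop_nhds_zero_of_lt_one (by positivity) hq).const_mul (Y 0)
  rw [mul_zero] at hgeom
  exact squeeze_zero hY (le_mul_pow_of_le_mul_pow_mul_rpow hY hA (by linarith) hδ hrec hY0) hgeom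

theorem eq_zero_of_le_mul_div_sub_rpow {φ : ℝ → ℝ} {k d M δ : ℝ} (hd : 0 < d) (hM : 0 ≤ M)
    (hδ : 0 < δ) (hφ : ∀ t ∈ Icc k (k + d), 0 ≤ φ t) (hanti : AntitoneOn φ (Icc k (k + d)))
    (hrec : ∀ a b, k ≤ a → a < b → b ≤ k + d → φ b ≤ M * (φ a / (b - a)) ^ (1 + δ))
    (hsmall : M * 2 ^ (1 + δ) / d ^ (1 + δ) * φ k ^ δ ≤ ((2 ^ (1 + δ)) ^ δ⁻¹)⁻¹) :
    φ (k + d) = 0 := by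
  set ℓ : ℕ → ℝ := fun n => k + d - d / 2 ^ n
  have hℓ_mem (n : ℕ) : ℓ n ∈ Icc k (k + d) := by
    have : d / 2 ^ n ≤ d := div_le_self hd.le (one_le_pow₀ one_le_two)
    constructor <;> simp only [ℓ] <;> linarith [div_nonneg hd.le (pow_nonneg zero_le_two n)]
  have hℓ_step (n : ℕ) : ℓ (n + 1) - ℓ n = d / 2 ^ (n + 1) := by
    simp only [ℓ]; field_simp; ring
  have hrec' (n : ℕ) : φ (ℓ (n + 1)) ≤
      M * 2 ^ (1 + δ) / d ^ (1 + δ) * (2 ^ (1 + δ)) ^ n * φ (ℓ n) ^ (1 + δ) := by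
    have hφn := hφ _ (hℓ_mem n)
    calc φ (ℓ (n + 1)) ≤ M * (φ (ℓ n) / (ℓ (n + 1) - ℓ n)) ^ (1 + δ) :=
          hrec _ _ (hℓ_mem n).1 (by rw [← sub_pos, hℓ_step]; positivity) (hℓ_mem _).2
      _ = M * (2 ^ (n + 1) * φ (ℓ n) / d) ^ (1 + δ) := by
          rw [hℓ_step]; congr 2; field_simp
      _ = _ := by
          rw [Real.div_rpow (by positivity) hd.le, Real.mul_rpow (by positivity) hφn,
            ← Real.rpow_pow_comm zero_le_two, pow_succ]
          ring
  have hℓ0 : ℓ 0 = k := by simp [ℓ]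
  have hlim : Tendsto (fun n => φ (ℓ n)) atTop (𝓝 0) :=
    tendsto_zero_of_le_mul_pow_mul_rpow (fun n => hφ _ (hℓ_mem n)) (by positivity)
      (Real.one_lt_rpow one_lt_two (by linarith)) hδ hrec' (by rwa [hℓ0])
  have hend : k + d ∈ Icc k (k + d) := right_mem_Icc.2 (by linarith)
  exact le_antisymm
    (ge_of_tendsto' hlim fun n => hanti (hℓ_mem n) hend (hℓ_mem n).2) (hφ _ hend)

theorem tendsto_setIntegral_Ioi_atTop_zero {E : Type*} [NormedAddCommGroup E] [NormedSpace ℝ E]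
    {f : ℝ → E} {a : ℝ} (hf : IntegrableOn f (Ioi a)) :
    Tendsto (fun k => ∫ t in Ioi k, f t) atTop (𝓝 0) := by
  have hempty : ⋂ k : ℝ, Ioi k = ∅ := iInter_eq_empty_iff.2 fun x => ⟨x, lt_irrefl x⟩
  simpa [hempty] using
    tendsto_setIntegral_of_antitone (fun _ => measurableSet_Ioi) antitone_Ioi ⟨a, hf⟩

section NonnegAntitone

variable {τ : ℝ → ℝ}

theorem antitoneOn_setIntegral_Ioi (hpos : ∀ t, 0 ≤ τ t) {a : ℝ} (hint : IntegrableOn τ (Ioi a)) :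
    AntitoneOn (fun k => ∫ t in Ioi k, τ t) (Ici a) := fun _ hk _ _ hkl =>
  setIntegral_mono_set (hint.mono_set (Ioi_subset_Ioi hk))
    (ae_of_all _ fun t => hpos t) (Ioi_subset_Ioi hkl).eventuallyLE

theorem le_setIntegral_Ioi_div_sub (hpos : ∀ t, 0 ≤ τ t) (hmono : Antitone τ) {a b : ℝ}
    (hint : IntegrableOn τ (Ioi a)) (hab : a < b) :
    τ b ≤ (∫ t in Ioi a, τ t) / (b - a) := by
  rw [le_div_iff₀ (sub_pos.2 hab), mul_comm]
  calc (b - a) * τ b = volume.real (Ioc a b) • τ b := by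
        rw [Real.volume_real_Ioc_of_le hab.le, smul_eq_mul]
    _ ≤ ∫ t in Ioc a b, τ t :=
        setIntegral_ge_of_const_le measurableSet_Ioc measure_Ioc_lt_top.ne
          (fun t ht => hmono ht.2) (hint.mono_set Ioc_subset_Ioi_self)
    _ ≤ ∫ t in Ioi a, τ t :=
        setIntegral_mono_set hint (ae_of_all _ fun t => hpos t) Ioc_subset_Ioi_self.eventuallyLE

theorem setIntegral_Ioi_le_mul_div_sub_rpow (hpos : ∀ t, 0 ≤ τ t) (hmono : Antitone τ)
    {C α β a b L : ℝ} (hC : 0 ≤ C) (hαβ : α ≤ β) (hβ : 0 ≤ β) (hb : 1 ≤ b) (hbL : b ≤ L)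
    (hint : IntegrableOn τ (Ioi a)) (hab : a < b)
    (hineq : ∫ t in Ioi b, τ t ≤ C * b ^ α * τ b ^ β) :
    ∫ t in Ioi b, τ t ≤ C * L ^ β * ((∫ t in Ioi a, τ t) / (b - a)) ^ β := by
  have hτ := le_setIntegral_Ioi_div_sub hpos hmono hint hab
  have hbα : b ^ α ≤ L ^ β :=
    (Real.rpow_le_rpow_of_exponent_le hb hαβ).trans (Real.rpow_le_rpow (by linarith) hbL hβ)
  exact hineq.trans <| mul_le_mul (mul_le_mul_of_nonneg_left hbα hC)
    (Real.rpow_le_rpow (hpos b) hτ hβ) (Real.rpow_nonneg (hpos b) _)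
    (mul_nonneg hC (Real.rpow_nonneg (by linarith) _))

end NonnegAntitone

theorem hartman_stampacchia_general (τ : ℝ → ℝ) (hpos : ∀ t, 0 ≤ τ t) (hmono : Antitone τ)
    (C k₀ δ α : ℝ) (hC : 0 < C) (hδ : 0 < δ)
    (hα : α ∈ Set.Icc (0 : ℝ) (1 + δ))
    (hint : ∀ k ≥ k₀, IntegrableOn τ (Set.Ioi k))
    (hineq : ∀ k ≥ k₀, ∫ t in Set.Ioi k, τ t ≤ C * k ^ α * (τ k) ^ (1 + δ)) :
    ∃ kmax : ℝ, ∀ k ≥ kmax, τ k = 0 := by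
  set φ : ℝ → ℝ := fun k => ∫ t in Ioi k, τ t
  have hφ_nonneg (k : ℝ) : 0 ≤ φ k := setIntegral_nonneg measurableSet_Ioi fun t _ => hpos t
  have hφ_small : Tendsto (fun k => C * 2 ^ (1 + δ) * 2 ^ (1 + δ) * φ k ^ δ) atTop (𝓝 0) := by
    simpa [Real.zero_rpow hδ.ne'] using
      ((tendsto_setIntegral_Ioi_atTop_zero (hint k₀ le_rfl)).rpow_const (Or.inr hδ.le)).const_mul
        (C * 2 ^ (1 + δ) * 2 ^ (1 + δ))
  obtain ⟨K, hK, hK_small⟩ := ((eventually_ge_atTop (max k₀ 1)).and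
    (hφ_small.eventually (eventually_le_nhds (by positivity :
      (0 : ℝ) < ((2 ^ (1 + δ)) ^ δ⁻¹)⁻¹)))).exists
  have hK₀ : k₀ ≤ K := le_of_max_le_left hK
  have hK1 : 1 ≤ K := le_of_max_le_right hK
  have hrec (a b : ℝ) (ha : K ≤ a) (hab : a < b) (hb : b ≤ K + K) :
      φ b ≤ C * (K + K) ^ (1 + δ) * (φ a / (b - a)) ^ (1 + δ) :=
    setIntegral_Ioi_le_mul_div_sub_rpow hpos hmono hC.le hα.2 (by linarith) (by linarith) hb
      (hint a (by linarith)) hab (hineq b (by linarith))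
  have hM : C * (K + K) ^ (1 + δ) * 2 ^ (1 + δ) / K ^ (1 + δ) = C * 2 ^ (1 + δ) * 2 ^ (1 + δ) := by
    rw [← two_mul, Real.mul_rpow zero_le_two (by linarith)]
    field_simp
  have hφ2K : φ (K + K) = 0 :=
    eq_zero_of_le_mul_div_sub_rpow (by linarith) (by positivity) hδ (fun t _ => hφ_nonneg t)
      ((antitoneOn_setIntegral_Ioi hpos (hint k₀ le_rfl)).mono fun t ht => hK₀.trans ht.1)
      hrec (by rwa [hM])
  refine ⟨K + K + 1, fun k hk => le_antisymm ?_ (hpos k)⟩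
  have hτk : τ k ≤ φ (K + K) / (k - (K + K)) :=
    le_setIntegral_Ioi_div_sub hpos hmono (hint (K + K) (by linarith)) (by linarith)
  rwa [hφ2K, zero_div] at hτk

/-- Hartman–Stampacchia maximum principle: a non-increasing nonnegative
function `τ` whose tail integrals satisfy `∫_k^∞ τ ≤ C k^α (τ k)^{1+δ}` for
`k ≥ k₀` vanishes identically beyond some finite level `k_max`. -/
theorem hartman_stampacchia (τ : ℝ → ℝ) (hpos : ∀ t, 0 ≤ τ t) (hmono : Antitone τ)
    (C k₀ δ α : ℝ) (hC : 0 < C) (hk₀ : 0 ≤ k₀) (hδ : 0 < δ)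
    (hα : α ∈ Set.Icc (0 : ℝ) (1 + δ))
    (hint : ∀ k ≥ k₀, IntegrableOn τ (Set.Ioi k))
    (hineq : ∀ k ≥ k₀, ∫ t in Set.Ioi k, τ t ≤ C * k ^ α * (τ k) ^ (1 + δ)) :
    ∃ kmax : ℝ, ∀ k ≥ kmax, τ k = 0 :=
  hartman_stampacchia_general τ hpos hmono C k₀ δ α hC hδ hα hint hineq
end

section
/- Let n ≥ 2, 1 < m ≤ n, 0 < R < 1, and B_R = {x ∈ ℝⁿ : |x| < R}. The vector field φ(x) := x / (|x|^m |log|x||^{m−1}) belongs to L^{n/(m−1)}(B_R; ℝⁿ), but for every ε > 0, φ does not belong to the Morrey space L^{p', n−(m−1)p'+ε}(B_R; ℝⁿ) for any p' ∈ (1, n/(m−1)]. -/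
/-!
Writing `φ` for the field, `‖φ x‖ = (‖x‖ |log ‖x‖|)^(1-m)`. In polar coordinates
`‖φ‖^(n/(m-1))` becomes `r^(n-1) · r^(-n) (-log r)^(-n) = r⁻¹ (-log r)^(-n)`, the derivative of
`(-log r)^(1-n) / (n-1)`, which tends to `0` at `0⁺` because `n > 1`; hence the integral is finite.

Since `t ↦ t |log t|` increases on `(0, e⁻¹]`, `‖φ‖ ≥ (ρ |log ρ|)^(1-m)` on `B_ρ`, so with
`q = (m-1)p'` the Morrey bound at the centre gives
`ρ^(n-q) |log ρ|^(-q) |B_1| ≤ C ρ^(n-q+ε)`, i.e. `|B_1| ≤ C ρ^ε |log ρ|^q`, which fails as `ρ → 0`.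
-/

open MeasureTheory Metric Set
open scoped ENNReal NNReal

noncomputable section

/-- Membership in the vector-valued Morrey space `L^{s,θ}(B_R; ℝⁿ)`. -/
def MemMorreyVec (n : ℕ) (Ω : Set (EuclideanSpace ℝ (Fin n)))
    (u : EuclideanSpace ℝ (Fin n) → EuclideanSpace ℝ (Fin n)) (s θ : ℝ) : Prop :=
  MemLp u (ENNReal.ofReal s) (volume.restrict Ω) ∧
    ∃ C : ℝ≥0∞, C ≠ ⊤ ∧ ∀ x₀ ∈ Ω, ∀ ρ : ℝ, 0 < ρ →
      ∫⁻ x in ball x₀ ρ ∩ Ω, (‖u x‖₊ : ℝ≥0∞) ^ s ≤ C * ENNReal.ofReal (ρ ^ θ)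

open Real Filter Topology Module

variable {E : Type*} [NormedAddCommGroup E] [NormedSpace ℝ E]

def logSingularField (m : ℝ) (x : E) : E := (1 / (‖x‖ ^ m * |log ‖x‖| ^ (m - 1))) • x

/-- Also valid at `x = 0` and `‖x‖ = 1`, where both sides vanish because `1 / 0 = 0` and
`0 ^ s = 0` for `s ≠ 0`. -/
theorem norm_logSingularField {m : ℝ} (hm : m ≠ 1) (x : E) :
    ‖logSingularField m x‖ = (‖x‖ * |log ‖x‖|) ^ (1 - m) := by
  have hm' : 1 - m ≠ 0 := sub_ne_zero.2 (Ne.symm hm)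
  rw [logSingularField, norm_smul, norm_div, norm_one, Real.norm_eq_abs,
    abs_of_nonneg (by positivity)]
  rcases (norm_nonneg x).eq_or_lt with hx | hx
  · rw [← hx, zero_mul, zero_rpow hm', mul_zero]
  rcases (abs_nonneg (log ‖x‖)).eq_or_lt with hl | hl
  · rw [← hl, mul_zero, zero_rpow hm', zero_rpow (by contrapose! hm'; linarith), mul_zero,
      div_zero, zero_mul]
  rw [mul_rpow hx.le hl.le, rpow_sub hx, rpow_one, show 1 - m = -(m - 1) by ring,
    rpow_neg hl.le]
  field_simp

theorem measurable_logSingularField [MeasurableSpace E] [BorelSpace E] (m : ℝ) :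
    Measurable (logSingularField (E := E) m) := by
  unfold logSingularField
  fun_prop

theorem tendsto_rpow_mul_abs_log_rpow_nhdsGT_zero {ε q : ℝ} (hε : 0 < ε) (hq : 0 < q) :
    Tendsto (fun r => r ^ ε * |log r| ^ q) (𝓝[>] 0) (𝓝 0) := by
  have h := ((tendsto_log_mul_rpow_nhdsGT_zero (div_pos hε hq)).abs.rpow_const
    (Or.inr hq.le))
  rw [abs_zero, zero_rpow hq.ne'] at h
  refine h.congr' (eventually_mem_nhdsWithin.mono fun r (hr : 0 < r) => ?_)
  rw [abs_mul, abs_of_pos (rpow_pos_of_pos hr _), mul_rpow (abs_nonneg _) (by positivity),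
    ← rpow_mul hr.le, div_mul_cancel₀ _ hq.ne', mul_comm]

theorem integrableOn_inv_mul_neg_log_rpow {a R : ℝ} (ha : 1 < a) (hR : R < 1) :
    IntegrableOn (fun r => r⁻¹ * (-log r) ^ (-a)) (Ioo 0 R) := by
  set g : ℝ → ℝ := fun r => (-log r) ^ (1 - a) / (a - 1)
  have hlog_pos : ∀ r ∈ Ioo 0 1, 0 < -log r := fun r hr => neg_pos.2 (log_neg hr.1 hr.2)
  have hcont : ContinuousOn g (Icc 0 R) := by
    rintro r ⟨hr0, hrR⟩
    rcases hr0.eq_or_lt with rfl | hr0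
    · have hlim : Tendsto g (𝓝[>] 0) (𝓝 (g 0)) := by
        have := ((tendsto_rpow_neg_atTop (sub_pos.2 ha)).comp
          (tendsto_neg_atBot_atTop.comp tendsto_log_nhdsGT_zero)).div_const (a - 1)
        rw [show g 0 = 0 by simp [g, zero_rpow (by linarith : 1 - a ≠ 0)]]
        rw [zero_div] at this
        refine this.congr fun r => ?_
        simp only [Function.comp, g, neg_sub]
      exact (continuousWithinAt_Ioi_iff_Ici.1 hlim).mono Icc_subset_Ici_self
    · exact (((continuousAt_log hr0.ne').neg.rpow_const
        (Or.inl (hlog_pos r ⟨hr0, hrR.trans_lt hR⟩).ne')).div_const _).continuousWithinAt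
  have hderiv : ∀ r ∈ Ioo 0 R, HasDerivAt g (r⁻¹ * (-log r) ^ (-a)) r := by
    intro r ⟨hr0, hrR⟩
    refine (((hasDerivAt_log hr0.ne').fun_neg.rpow_const
      (Or.inl (hlog_pos r ⟨hr0, hrR.trans hR⟩).ne')).div_const (a - 1)).congr_deriv ?_
    rw [show 1 - a - 1 = -a by ring]
    field_simp [(sub_pos.2 ha).ne']
    ring
  refine (intervalIntegral.integrableOn_deriv_of_nonneg hcont hderiv fun r hr => ?_).mono_set
    Ioo_subset_Ioc_self
  exact mul_nonneg (inv_nonneg.2 hr.1.le) (rpow_nonneg (hlog_pos r ⟨hr.1, hr.2.trans hR⟩).le _)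

theorem rpow_le_norm_logSingularField {m ρ : ℝ} (hm : 1 < m) {x : E} (hx : 0 < ‖x‖)
    (hxρ : ‖x‖ ≤ ρ) (hρ : ρ ≤ exp (-1)) :
    (ρ * |log ρ|) ^ (1 - m) ≤ ‖logSingularField m x‖ := by
  have hlt_one : exp (-1) < 1 := exp_lt_one_iff.2 (by norm_num)
  have hlog_x : log ‖x‖ < 0 := log_neg hx (by linarith)
  have hlog_ρ : log ρ < 0 := log_neg (hx.trans_le hxρ) (by linarith)
  have hanti : ρ * log ρ ≤ ‖x‖ * log ‖x‖ :=
    mul_log_strictAntiOn.antitoneOn ⟨hx.le, hxρ.trans hρ⟩ ⟨(hx.trans_le hxρ).le, hρ⟩ hxρ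
  rw [norm_logSingularField hm.ne']
  refine rpow_le_rpow_of_nonpos (mul_pos hx (abs_pos.2 hlog_x.ne)) ?_ (by linarith)
  rw [abs_of_neg hlog_x, abs_of_neg hlog_ρ]
  linarith

variable [FiniteDimensional ℝ E] [MeasurableSpace E] [BorelSpace E] (μ : Measure E)
  [μ.IsAddHaarMeasure]

theorem memLp_logSingularField {m R : ℝ} (hE : 2 ≤ finrank ℝ E) (hm : 1 < m) (hR : R < 1) :
    MemLp (logSingularField m) (ENNReal.ofReal (finrank ℝ E / (m - 1)))
      (μ.restrict (ball 0 R)) := by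
  set d := finrank ℝ E
  have : Nontrivial E := Module.nontrivial_of_finrank_pos (by omega : 0 < d)
  have hs : 0 < (d : ℝ) / (m - 1) := div_pos (by positivity) (sub_pos.2 hm)
  rw [← integrable_norm_rpow_iff (measurable_logSingularField m).aestronglyMeasurable
    (by simpa using hs) ENNReal.ofReal_ne_top, ENNReal.toReal_ofReal hs.le]
  have hnorm : ∀ x : E, ‖logSingularField m x‖ ^ ((d : ℝ) / (m - 1))
      = (‖x‖ * |log ‖x‖|) ^ (-(d : ℝ)) := fun x => by
    rw [norm_logSingularField hm.ne', ← rpow_mul (by positivity)]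
    congr 1
    field_simp [(sub_pos.2 hm).ne']
    ring
  simp_rw [hnorm]
  refine (integrableOn_fun_norm_addHaar μ (f := fun r => (r * |log r|) ^ (-(d : ℝ)))).2 ?_
  refine (integrableOn_inv_mul_neg_log_rpow (a := d) (by exact_mod_cast hE) hR).congr_fun
    (fun r hr => ?_) measurableSet_Ioo
  have hlog : log r < 0 := log_neg hr.1 (hr.2.trans hR)
  rw [smul_eq_mul, abs_of_neg hlog, mul_rpow hr.1.le (neg_nonneg.2 hlog.le),
    rpow_neg hr.1.le, rpow_natCast, ← mul_assoc, pow_sub₀ r hr.1.ne' (by omega : 1 ≤ d), pow_one]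
  field_simp [hr.1.ne']

theorem ofReal_mul_measure_ball_le_lintegral_logSingularField [Nontrivial E] {m p ρ : ℝ}
    (hm : 1 < m) (hp : 0 ≤ p) (hρ : ρ ≤ exp (-1)) :
    ENNReal.ofReal ((ρ * |log ρ|) ^ ((1 - m) * p)) * μ (ball 0 ρ)
      ≤ ∫⁻ x in ball 0 ρ, (‖logSingularField m x‖₊ : ℝ≥0∞) ^ p ∂μ := by
  rw [← setLIntegral_const]
  refine lintegral_mono_ae ?_
  filter_upwards [ae_restrict_mem measurableSet_ball, ae_restrict_of_ae (μ.ae_ne 0)]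
    with x hxρ hx0
  rw [mem_ball_zero_iff] at hxρ
  have hbound := rpow_le_norm_logSingularField hm (norm_pos_iff.2 hx0) hxρ.le hρ
  have hρ0 : 0 ≤ ρ * |log ρ| := mul_nonneg ((norm_nonneg x).trans hxρ.le) (abs_nonneg _)
  rw [rpow_mul hρ0, ← ENNReal.ofReal_rpow_of_nonneg (rpow_nonneg hρ0 _) hp, ← enorm_eq_nnnorm,
    ← ofReal_norm]
  gcongr

theorem measure_ball_one_le_of_lintegral_logSingularField_le [Nontrivial E] {m p ε ρ : ℝ}
    {C : ℝ≥0∞} (hm : 1 < m) (hp : 0 ≤ p) (hρ0 : 0 < ρ) (hρ : ρ ≤ exp (-1))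
    (h : ∫⁻ x in ball 0 ρ, (‖logSingularField m x‖₊ : ℝ≥0∞) ^ p ∂μ
      ≤ C * ENNReal.ofReal (ρ ^ ((finrank ℝ E : ℝ) - (m - 1) * p + ε))) :
    μ (ball 0 1) ≤ C * ENNReal.ofReal (ρ ^ ε * |log ρ| ^ ((m - 1) * p)) := by
  have hL : 0 < |log ρ| :=
    abs_pos.2 (log_neg hρ0 (hρ.trans_lt (exp_lt_one_iff.2 (by norm_num)))).ne
  set a := (ρ * |log ρ|) ^ ((1 - m) * p) * ρ ^ finrank ℝ E with ha_def
  have ha : 0 < a := by positivity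
  have hab : a * (ρ ^ ε * |log ρ| ^ ((m - 1) * p))
      = ρ ^ ((finrank ℝ E : ℝ) - (m - 1) * p + ε) := by
    rw [ha_def, mul_rpow hρ0.le hL.le, rpow_add hρ0, rpow_sub hρ0, rpow_natCast,
      show (1 - m) * p = -((m - 1) * p) by ring, rpow_neg hρ0.le, rpow_neg hL.le]
    field_simp
  refine (ENNReal.mul_le_mul_iff_right (ENNReal.ofReal_pos.2 ha).ne' ENNReal.ofReal_ne_top).1 ?_
  calc ENNReal.ofReal a * μ (ball 0 1)
      = ENNReal.ofReal ((ρ * |log ρ|) ^ ((1 - m) * p)) * μ (ball 0 ρ) := by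
        rw [Measure.addHaar_ball μ 0 hρ0.le, ha_def, ENNReal.ofReal_mul (by positivity), mul_assoc]
    _ ≤ ∫⁻ x in ball 0 ρ, (‖logSingularField m x‖₊ : ℝ≥0∞) ^ p ∂μ :=
        ofReal_mul_measure_ball_le_lintegral_logSingularField μ hm hp hρ
    _ ≤ C * ENNReal.ofReal (ρ ^ ((finrank ℝ E : ℝ) - (m - 1) * p + ε)) := h
    _ = ENNReal.ofReal a * (C * ENNReal.ofReal (ρ ^ ε * |log ρ| ^ ((m - 1) * p))) := by
        rw [← hab, ENNReal.ofReal_mul ha.le]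
        ring

theorem not_memMorreyVec_logSingularField {n : ℕ} (hn : 1 ≤ n) {m R p ε : ℝ} (hm : 1 < m)
    (hR : 0 < R) (hp : 0 < p) (hε : 0 < ε) :
    ¬ MemMorreyVec n (ball 0 R) (logSingularField m) p (n - (m - 1) * p + ε) := by
  rintro ⟨-, C, hC, hbound⟩
  have : Nontrivial (EuclideanSpace ℝ (Fin n)) :=
    Module.nontrivial_of_finrank_pos (by rw [finrank_euclideanSpace_fin]; omega)
  have hlim : Tendsto (fun ρ => C * ENNReal.ofReal (ρ ^ ε * |log ρ| ^ ((m - 1) * p)))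
      (𝓝[>] 0) (𝓝 0) := by
    simpa using ENNReal.Tendsto.const_mul (ENNReal.tendsto_ofReal
      (tendsto_rpow_mul_abs_log_rpow_nhdsGT_zero hε (mul_pos (sub_pos.2 hm) hp))) (Or.inr hC)
  obtain ⟨ρ, hsmall, hρ0, hρ⟩ := ((hlim.eventually (gt_mem_nhds (measure_ball_pos volume
    (0 : EuclideanSpace ℝ (Fin n)) one_pos))).and
    (Ioo_mem_nhdsGT (lt_min hR (exp_pos (-1))))).exists
  refine hsmall.not_ge (measure_ball_one_le_of_lintegral_logSingularField_le volume hm hp.le hρ0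
    (hρ.trans_le (min_le_right _ _)).le ?_)
  rw [finrank_euclideanSpace_fin]
  simpa [inter_eq_left.2 (ball_subset_ball (hρ.trans_le (min_le_left _ _)).le)]
    using hbound 0 (mem_ball_self hR) ρ hρ0

theorem sharpness_phi_general (n : ℕ) (hn : 2 ≤ n) (m R : ℝ)
    (hm : 1 < m) (hR₀ : 0 < R) (hR₁ : R < 1) :
    let φ : EuclideanSpace ℝ (Fin n) → EuclideanSpace ℝ (Fin n) :=
      fun x => (1 / (‖x‖ ^ m * |Real.log ‖x‖| ^ (m - 1))) • x
    let B : Set (EuclideanSpace ℝ (Fin n)) := ball 0 R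
    MemLp φ (ENNReal.ofReal ((n : ℝ) / (m - 1))) (volume.restrict B) ∧
      ∀ ε > (0 : ℝ), ∀ p' : ℝ, 1 < p' → p' ≤ (n : ℝ) / (m - 1) →
        ¬ MemMorreyVec n B φ p' ((n : ℝ) - (m - 1) * p' + ε) := by
  intro φ B
  refine ⟨?_, fun ε hε p' hp' _ =>
    not_memMorreyVec_logSingularField (by omega) hm hR₀ (by linarith) hε⟩
  have h := memLp_logSingularField (E := EuclideanSpace ℝ (Fin n)) volume
    (by simpa using hn) hm hR₁
  rw [finrank_euclideanSpace_fin] at h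
  exact h

/-- The field `φ(x) = x/(|x|^m |log|x||^{m-1})` lies in `L^{n/(m-1)}(B_R; ℝⁿ)`
but in no Morrey space `L^{p', n-(m-1)p'+ε}(B_R; ℝⁿ)` with `ε > 0` and
`p' ∈ (1, n/(m-1)]`. -/
theorem sharpness_phi (n : ℕ) (hn : 2 ≤ n) (m R : ℝ)
    (hm : 1 < m) (hmn : m ≤ n) (hR₀ : 0 < R) (hR₁ : R < 1) :
    let φ : EuclideanSpace ℝ (Fin n) → EuclideanSpace ℝ (Fin n) :=
      fun x => (1 / (‖x‖ ^ m * |Real.log ‖x‖| ^ (m - 1))) • x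
    let B : Set (EuclideanSpace ℝ (Fin n)) := ball 0 R
    MemLp φ (ENNReal.ofReal ((n : ℝ) / (m - 1))) (volume.restrict B) ∧
      ∀ ε > (0 : ℝ), ∀ p' : ℝ, 1 < p' → p' ≤ (n : ℝ) / (m - 1) →
        ¬ MemMorreyVec n B φ p' ((n : ℝ) - (m - 1) * p' + ε) :=
  sharpness_phi_general n hn m R hm hR₀ hR₁
end
end
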